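/- arXiv:2511.11841 — 2 statements merged into one kernel-verified Lean document; each statement's English description precedes it below -/
import Mathlib

section
/- Let K be a perfect field and let p < q be distinct primes with p ∤ q − 1. Then every Galois extension L/K of degree pq is not primitive. -/
open IntermediateField Module

section Defs

variable (K Kbar : Type*) [Field K] [Field Kbar] [Algebra K Kbar]

/-- The Galois closure inside the ambient field `Kbar` of an intermediate field `L` of
`Kbar / K`: the compositum of all the `K`-conjugates of `L` in `Kbar`. -/
noncomputable def galClosure (L : IntermediateField K Kbar) : IntermediateField K Kbar :=
  ⨆ f : ↥L →ₐ[K] Kbar, f.fieldRange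

/-- The subgroup `H = Gal(L̃/L)` of `G = Gal(L̃/K)`. -/
noncomputable def fixSub (L : IntermediateField K Kbar) :
    Subgroup (↥(galClosure K Kbar L) ≃ₐ[K] ↥(galClosure K Kbar L)) :=
  (IntermediateField.comap (galClosure K Kbar L).val L).fixingSubgroup

/-- The cluster size `r_K(L) = [N_G(H) : H]`. -/
noncomputable def clusterSize (L : IntermediateField K Kbar) : ℕ :=
  (fixSub K Kbar L).relIndex (Subgroup.normalizer (fixSub K Kbar L : Set _))

/-- The number of clusters `s_K(L) = [G : N_G(H)]`. -/
noncomputable def numClusters (L : IntermediateField K Kbar) : ℕ :=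
  (Subgroup.normalizer (fixSub K Kbar L :
      Set (↥(galClosure K Kbar L) ≃ₐ[K] ↥(galClosure K Kbar L)))).index

/-- The ascending index `t_K(L) = [G : H^G]`. -/
noncomputable def ascIndex (L : IntermediateField K Kbar) : ℕ :=
  (Subgroup.normalClosure (fixSub K Kbar L :
      Set (↥(galClosure K Kbar L) ≃ₐ[K] ↥(galClosure K Kbar L)))).index

/-- The quantity `u_K(L) = [H^G : H]`. -/
noncomputable def uIndex (L : IntermediateField K Kbar) : ℕ :=
  (fixSub K Kbar L).relIndex (Subgroup.normalClosure (fixSub K Kbar L :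
      Set (↥(galClosure K Kbar L) ≃ₐ[K] ↥(galClosure K Kbar L))))

/-- `M/K` is obtained by strong cluster magnification from `L/K` through `F/K`. -/
def IsSCMvia (M L F : IntermediateField K Kbar) : Prop :=
  L ≤ M ∧ 2 < Module.finrank K ↥L ∧ FiniteDimensional K ↥F ∧ IsGalois K ↥F ∧
    galClosure K Kbar L ⊓ F = ⊥ ∧ L ⊔ F = M

/-- `M/K` is primitive: it is not obtained by a nontrivial strong cluster magnification
from any subextension over `K`. -/
def IsPrimitive (M : IntermediateField K Kbar) : Prop :=
  ¬ ∃ L F : IntermediateField K Kbar, IsSCMvia K Kbar M L F ∧ F ≠ ⊥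

/-- `M/K` is obtained by strong general magnification from `L/K` through `J/K`. -/
def IsSGMvia (M L J : IntermediateField K Kbar) : Prop :=
  L ≤ M ∧ 1 < Module.finrank K ↥L ∧ FiniteDimensional K ↥J ∧
    galClosure K Kbar L ⊓ galClosure K Kbar J = ⊥ ∧ L ⊔ J = M

/-- `M/K` is general primitive: not obtained by a nontrivial strong general magnification
from any subextension over `K`. -/
def IsGeneralPrimitive (M : IntermediateField K Kbar) : Prop :=
  ¬ ∃ L J : IntermediateField K Kbar, IsSGMvia K Kbar M L J ∧ J ≠ ⊥

/-- `F/E` is a Galois pair of intermediate fields: `E ≤ F` and `F/E` is Galois. -/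
def IsGaloisPair (E F : IntermediateField K Kbar) : Prop :=
  ∃ h : E ≤ F, IsGalois ↥E ↥(IntermediateField.extendScalars h)

/-- One step of the unique descending chain: `N'` is an intermediate field of `N/K` such
that `N/N'` is Galois of maximal possible degree. -/
def DescStep (N N' : IntermediateField K Kbar) : Prop :=
  N' ≤ N ∧ IsGaloisPair K Kbar N' N ∧
    ∀ N'' : IntermediateField K Kbar, N'' ≤ N → IsGaloisPair K Kbar N'' N →
      Module.finrank K ↥N' ≤ Module.finrank K ↥N''

/-- One step of the unique ascending chain for `L/K`: `F'` is an intermediate field of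
`L/F` such that `F'/F` is Galois of maximal possible degree. -/
def AscStep (L F F' : IntermediateField K Kbar) : Prop :=
  F ≤ F' ∧ F' ≤ L ∧ IsGaloisPair K Kbar F F' ∧
    ∀ F'' : IntermediateField K Kbar, F ≤ F'' → F'' ≤ L → IsGaloisPair K Kbar F F'' →
      Module.finrank K ↥F'' ≤ Module.finrank K ↥F'

/-- `E` occurs in the unique descending chain of `L/K`. -/
def InDescChain (L E : IntermediateField K Kbar) : Prop :=
  Relation.ReflTransGen (DescStep K Kbar) L E

/-- `E` occurs in the unique ascending chain of `L/K`. -/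
def InAscChain (L E : IntermediateField K Kbar) : Prop :=
  Relation.ReflTransGen (AscStep K Kbar L) ⊥ E

end Defs

/-! Because `p ∤ q - 1` and `q ∤ p - 1`, Sylow's theorems leave only one Sylow subgroup of each
order in `Gal(L/K)`, so `Gal(L/K) = P × Q` with `P, Q` normal of orders `p, q`. The fixed fields of
`P` and `Q` are Galois over `K` of degrees `q` and `p`, they meet in `K` and generate `L`; thus `L`
is the strong cluster magnification of its degree-`q` subfield (`q > 2`) by its degree-`p` one. -/

section Sylow

variable {G : Type*} [Group G] [Finite G] {r s : ℕ} [Fact r.Prime]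

theorem Sylow.card_eq_one_of_card_eq_mul (hs : s.Prime) (hmod : ¬ s ≡ 1 [MOD r])
    (hcard : Nat.card G = r * s) : Nat.card (Sylow r G) = 1 := by
  obtain ⟨P⟩ : Nonempty (Sylow r G) := inferInstance
  have hindex : P.index ∣ s := by
    have hcop : Nat.Coprime P.index r :=
      ((Nat.Prime.coprime_iff_not_dvd Fact.out).2 P.not_dvd_index).symm
    exact hcop.dvd_of_dvd_mul_left (hcard ▸ P.index_dvd_card)
  rcases hs.eq_one_or_self_of_dvd _ (P.card_dvd_index.trans hindex) with h | h
  · exact h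
  · exact absurd (h ▸ card_sylow_modEq_one r G) hmod

theorem Sylow.card_eq_of_card_eq_mul (hrs : ¬ r ∣ s) (hcard : Nat.card G = r * s)
    (P : Sylow r G) : Nat.card P = r := by
  have hr : r.Prime := Fact.out
  have hs : s ≠ 0 := by rintro rfl; exact hrs (dvd_zero r)
  rw [P.card_eq_multiplicity, hcard, Nat.factorization_mul hr.ne_zero hs, Finsupp.add_apply,
    hr.factorization_self, Nat.factorization_eq_zero_of_not_dvd hrs, pow_one]

theorem exists_normal_subgroup_card_eq_of_card_eq_mul (hs : s.Prime) (hrs : r ≠ s)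
    (hmod : ¬ s ≡ 1 [MOD r]) (hcard : Nat.card G = r * s) :
    ∃ P : Subgroup G, P.Normal ∧ Nat.card P = r ∧ P.index = s := by
  obtain ⟨P⟩ : Nonempty (Sylow r G) := inferInstance
  have : Subsingleton (Sylow r G) :=
    (Nat.card_eq_one_iff_unique.mp (Sylow.card_eq_one_of_card_eq_mul hs hmod hcard)).1
  have hrs' : ¬ r ∣ s := fun h => hrs ((Nat.prime_dvd_prime_iff_eq Fact.out hs).mp h)
  have hP : Nat.card P = r := P.card_eq_of_card_eq_mul hrs' hcard
  have hindex := P.card_mul_index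
  rw [hP, hcard] at hindex
  exact ⟨P, P.normal_of_subsingleton, hP,
    Nat.eq_of_mul_eq_mul_left (Nat.Prime.pos Fact.out) hindex⟩

end Sylow

section Galois

variable {K L : Type*} [Field K] [Field L] [Algebra K L] [FiniteDimensional K L] [IsGalois K L]

theorem IsGalois.fixedField_inf (H₁ H₂ : Subgroup Gal(L/K)) :
    fixedField (H₁ ⊓ H₂) = fixedField H₁ ⊔ fixedField H₂ :=
  intermediateFieldEquivSubgroup.symm.map_sup (.toDual H₁) (.toDual H₂)

theorem IsGalois.fixedField_sup (H₁ H₂ : Subgroup Gal(L/K)) :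
    fixedField (H₁ ⊔ H₂) = fixedField H₁ ⊓ fixedField H₂ :=
  intermediateFieldEquivSubgroup.symm.map_inf (.toDual H₁) (.toDual H₂)

end Galois

section Magnification

variable {K Kbar : Type*} [Field K] [Field Kbar] [Algebra K Kbar]

theorem galClosure_eq_self (N : IntermediateField K Kbar) [Normal K N] :
    galClosure K Kbar N = N := by
  have : Nonempty (N →ₐ[K] Kbar) := ⟨N.val⟩
  rw [galClosure, iSup_congr fun f => AlgHom.fieldRange_of_normal f, iSup_const]

theorem not_isPrimitive_sup (E F : IntermediateField K Kbar) [Normal K E]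
    [FiniteDimensional K F] [IsGalois K F] (hE : 2 < finrank K E) (hEF : E ⊓ F = ⊥)
    (hF : F ≠ ⊥) : ¬ IsPrimitive K Kbar (E ⊔ F) := fun h =>
  h ⟨E, F, ⟨le_sup_left, hE, inferInstance, inferInstance, by rw [galClosure_eq_self, hEF],
    rfl⟩, hF⟩

variable (L : IntermediateField K Kbar) [FiniteDimensional K L] [IsGalois K L]

theorem finrank_lift_fixedField (H : Subgroup Gal(L/K)) :
    finrank K (lift (fixedField H)) = H.index := by
  rw [← (liftAlgEquiv _).toLinearEquiv.finrank_eq, finrank_eq_fixingSubgroup_index,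
    fixingSubgroup_fixedField]

theorem not_isPrimitive_of_isComplement' {H₁ H₂ : Subgroup Gal(L/K)} [H₁.Normal] [H₂.Normal]
    (hc : H₁.IsComplement' H₂) (h₁ : 2 < H₁.index) (h₂ : 1 < H₂.index) :
    ¬ IsPrimitive K Kbar L := by
  have hsup : lift (fixedField H₁) ⊔ lift (fixedField H₂) = L := by
    rw [← lift_sup, ← IsGalois.fixedField_inf, hc.disjoint.eq_bot, fixedField_bot, lift_top]
  have hinf : lift (fixedField H₁) ⊓ lift (fixedField H₂) = ⊥ := by
    rw [← lift_inf, ← IsGalois.fixedField_sup, hc.sup_eq_top, IsGalois.fixedField_top, lift_bot]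
  have : IsGalois K (lift (fixedField H₁)) := .of_algEquiv (liftAlgEquiv _)
  have : IsGalois K (lift (fixedField H₂)) := .of_algEquiv (liftAlgEquiv _)
  have : FiniteDimensional K (lift (fixedField H₂)) := .equiv (liftAlgEquiv _).toLinearEquiv
  rw [← hsup]
  refine not_isPrimitive_sup _ _ (finrank_lift_fixedField L H₁ ▸ h₁) hinf fun h => ?_
  have := finrank_lift_fixedField L H₂
  rw [h, IntermediateField.finrank_bot] at this
  omega

end Magnification

theorem not_primitive_of_galois_degree_pq_general
    (K Kbar : Type*) [Field K] [Field Kbar] [Algebra K Kbar]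
    (p q : ℕ) (hp : p.Prime) (hq : q.Prime) (hpq : p < q) (hndvd : ¬ p ∣ (q - 1))
    (L : IntermediateField K Kbar) [FiniteDimensional K ↥L] [IsGalois K ↥L]
    (hdeg : Module.finrank K ↥L = p * q) :
    ¬ IsPrimitive K Kbar L := by
  have : Fact p.Prime := ⟨hp⟩
  have : Fact q.Prime := ⟨hq⟩
  have hG : Nat.card Gal(L/K) = p * q := by rw [IsGalois.card_aut_eq_finrank, hdeg]
  have hq_mod : ¬ q ≡ 1 [MOD p] := fun h => hndvd ((Nat.modEq_iff_dvd' hq.one_lt.le).mp h.symm)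
  have hp_mod : ¬ p ≡ 1 [MOD q] := fun h => hp.one_lt.ne' <| by
    rwa [Nat.ModEq, Nat.mod_eq_of_lt hpq, Nat.mod_eq_of_lt hq.one_lt] at h
  obtain ⟨P, _, hP, hPindex⟩ :=
    exists_normal_subgroup_card_eq_of_card_eq_mul hq hpq.ne hq_mod hG
  obtain ⟨Q, _, hQ, hQindex⟩ :=
    exists_normal_subgroup_card_eq_of_card_eq_mul hp hpq.ne' hp_mod (hG.trans (mul_comm p q))
  have hc : P.IsComplement' Q := Subgroup.isComplement'_of_coprime (by rw [hP, hQ, hG])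
    (by rw [hP, hQ]; exact (Nat.coprime_primes hp hq).2 hpq.ne)
  exact not_isPrimitive_of_isComplement' L hc (by have := hp.two_le; omega) (hQindex ▸ hp.one_lt)

/-- Let `K` be a perfect field and `p < q` distinct primes with `p ∤ q - 1`.
Then every Galois extension `L/K` of degree `p * q` is not primitive. -/
theorem not_primitive_of_galois_degree_pq
    (K Kbar : Type*) [Field K] [PerfectField K] [Field Kbar] [Algebra K Kbar]
    [IsAlgClosure K Kbar]
    (p q : ℕ) (hp : p.Prime) (hq : q.Prime) (hpq : p < q) (hndvd : ¬ p ∣ (q - 1))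
    (L : IntermediateField K Kbar) [FiniteDimensional K ↥L] [IsGalois K ↥L]
    (hdeg : Module.finrank K ↥L = p * q) :
    ¬ IsPrimitive K Kbar L :=
  not_primitive_of_galois_degree_pq_general K Kbar p q hp hq hpq hndvd L hdeg
end

section
/- Let n = 2^k with k ≥ 2, and let c be a positive odd integer such that the polynomial x^n − c is irreducible over ℚ. Let a = c^{1/n} be the positive real root of x^n − c and L = ℚ(a). Then L/ℚ is primitive. -/
open IntermediateField Module

/-! Every intermediate field `E ≠ ℚ` of `ℚ(a) ⊂ ℝ` contains `√c = a ^ (2 ^ (k - 1))`. Indeed, all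
roots of `x ^ (2 ^ k) - c` have absolute value `a`, so the constant coefficient of the minimal
polynomial of `a` over `E` is a real number of absolute value `a ^ d`, `d = [ℚ(a) : E]`; hence
`a ^ d ∈ E`, and `d` is a proper divisor of `2 ^ k`, so it divides `2 ^ (k - 1)`. In a strong cluster
magnification `ℚ(a) = L F` both `L` and `F` are such fields, so `√c ∈ L̃ ∩ F = ℚ`, which contradicts
the irreducibility of `x ^ (2 ^ k) - c`. -/

open Polynomial

theorem le_galClosure {K Kbar : Type*} [Field K] [Field Kbar] [Algebra K Kbar]
    (L : IntermediateField K Kbar) : L ≤ galClosure K Kbar L :=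
  (fieldRange_val L).symm.le.trans (le_iSup (fun f : ↥L →ₐ[K] Kbar => f.fieldRange) L.val)

theorem Nat.dvd_pow_pred_of_mul_eq_prime_pow {p k e d : ℕ} (hp : p.Prime)
    (h : e * d = p ^ k) (he : e ≠ 1) : d ∣ p ^ (k - 1) := by
  obtain ⟨m, hmk, rfl⟩ := (Nat.dvd_prime_pow hp).mp (Dvd.intro_left e h)
  refine Nat.pow_dvd_pow p ?_
  rcases hmk.lt_or_eq with hlt | rfl
  · omega
  · exact absurd (Nat.eq_of_mul_eq_mul_right (pow_pos hp.pos m) (h.trans (one_mul _).symm)) he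

theorem norm_coeff_zero_eq_pow_natDegree {𝕜 : Type*} [NormedField 𝕜] [IsAlgClosed 𝕜]
    {p : 𝕜[X]} (hp : p.Monic) {r : ℝ} (h : ∀ z ∈ p.roots, ‖z‖ = r) :
    ‖p.coeff 0‖ = r ^ p.natDegree := by
  have hs := IsAlgClosed.splits p
  rw [hs.coeff_zero_eq_prod_roots_of_monic hp, norm_mul, norm_pow, norm_neg, norm_one, one_pow,
    one_mul, ← normHom_apply, map_multiset_prod,
    Multiset.map_congr rfl fun z hz ↦ (normHom_apply z).trans (h z hz), Multiset.map_const',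
    Multiset.prod_replicate, hs.natDegree_eq_card_roots]

theorem adjoin_ofReal_subset_range (a : ℝ) :
    (ℚ⟮(a : ℂ)⟯ : Set ℂ) ⊆ Set.range ((↑) : ℝ → ℂ) := by
  have h : ℚ⟮(a : ℂ)⟯ = ℚ⟮a⟯.map (IsScalarTower.toAlgHom ℚ ℝ ℂ) := by
    rw [adjoin_map, Set.image_singleton]; rfl
  rintro x hx
  rw [h] at hx
  obtain ⟨r, -, rfl⟩ := hx
  exact ⟨r, rfl⟩

section RealSubfield

variable {K : Type*} [Field K] [Algebra K ℂ] {E : IntermediateField K ℂ}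

theorem pow_natDegree_minpoly_mem (hE : (E : Set ℂ) ⊆ Set.range ((↑) : ℝ → ℂ)) {a : ℝ}
    (ha : 0 ≤ a) (hint : IsIntegral E (a : ℂ))
    (hroots : ∀ z ∈ (minpoly E (a : ℂ)).aroots ℂ, ‖z‖ = a) :
    (a : ℂ) ^ (minpoly E (a : ℂ)).natDegree ∈ E := by
  set p := minpoly E (a : ℂ)
  have hb : ‖((p.coeff 0 : E) : ℂ)‖ = a ^ p.natDegree := by
    rw [← natDegree_map (algebraMap E ℂ), ← norm_coeff_zero_eq_pow_natDegree
      ((minpoly.monic hint).map _) hroots, coeff_map]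
    rfl
  obtain ⟨r, hr⟩ := hE (p.coeff 0).2
  rw [← hr, Complex.norm_real, Real.norm_eq_abs] at hb
  rw [← Complex.ofReal_pow]
  rcases (abs_eq (pow_nonneg ha _)).mp hb with h | h
  · rw [← h, hr]
    exact (p.coeff 0).2
  · rw [neg_eq_iff_eq_neg.mp h.symm, Complex.ofReal_neg, hr]
    exact neg_mem (p.coeff 0).2

theorem pow_natDegree_minpoly_mem_of_pow_eq (hE : (E : Set ℂ) ⊆ Set.range ((↑) : ℝ → ℂ))
    {a : ℝ} (ha : 0 ≤ a) {n : ℕ} (hn : n ≠ 0) {c : K} (hc : (a : ℂ) ^ n = algebraMap K ℂ c) :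
    (a : ℂ) ^ (minpoly E (a : ℂ)).natDegree ∈ E := by
  set q : E[X] := X ^ n - C (algebraMap K E c)
  have hq : aeval (a : ℂ) q = 0 := by
    simp [q, hc, ← IsScalarTower.algebraMap_apply]
  have hint : IsIntegral E (a : ℂ) := ⟨q, monic_X_pow_sub_C _ hn, hq⟩
  refine pow_natDegree_minpoly_mem hE ha hint fun z hz ↦ ?_
  have hzq : aeval z q = 0 :=
    aeval_eq_zero_of_dvd_aeval_eq_zero (minpoly.dvd E _ hq) (mem_aroots.mp hz).2
  have hzn : z ^ n = (a : ℂ) ^ n := by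
    simpa [q, hc, ← IsScalarTower.algebraMap_apply, sub_eq_zero] using hzq
  have : ‖z‖ ^ n = a ^ n := by
    rw [← norm_pow, hzn, norm_pow, Complex.norm_real, Real.norm_of_nonneg ha]
  exact (pow_left_inj₀ (norm_nonneg z) ha hn).mp this

end RealSubfield

theorem pow_prime_pow_pred_mem_of_le_adjoin {p k : ℕ} (hp : p.Prime) {c : ℚ}
    (hirr : Irreducible (X ^ (p ^ k) - C c)) {a : ℝ} (ha : 0 ≤ a) (hpow : a ^ (p ^ k) = c)
    {E : IntermediateField ℚ ℂ} (hEa : E ≤ ℚ⟮(a : ℂ)⟯) (hE : E ≠ ⊥) :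
    (a : ℂ) ^ (p ^ (k - 1)) ∈ E := by
  have hn : p ^ k ≠ 0 := pow_ne_zero k hp.ne_zero
  have hpow' : (a : ℂ) ^ (p ^ k) = algebraMap ℚ ℂ c := by
    rw [← Complex.ofReal_pow, hpow]; simp
  have hroot : aeval (a : ℂ) (X ^ (p ^ k) - C c) = 0 := by simp [hpow']
  have hint : IsIntegral ℚ (a : ℂ) := ⟨_, monic_X_pow_sub_C c hn, hroot⟩
  have hdeg : finrank ℚ ℚ⟮(a : ℂ)⟯ = p ^ k := by
    rw [adjoin.finrank hint, ← minpoly.eq_of_irreducible_of_monic hirr hroot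
      (monic_X_pow_sub_C c hn), natDegree_X_pow_sub_C]
  have htower : finrank ℚ E * (minpoly E (a : ℂ)).natDegree = p ^ k := by
    rw [← adjoin.finrank hint.tower_top, ← extendScalars_adjoin hEa,
      ← relfinrank_eq_finrank_of_le, finrank_bot_mul_relfinrank hEa, hdeg]
  obtain ⟨m, hm⟩ := Nat.dvd_pow_pred_of_mul_eq_prime_pow hp htower (mt finrank_eq_one_iff.mp hE)
  rw [hm, pow_mul]
  exact pow_mem (pow_natDegree_minpoly_mem_of_pow_eq
    ((SetLike.coe_subset_coe.mpr hEa).trans (adjoin_ofReal_subset_range a)) ha hn hpow') m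

theorem primitive_rational_two_power_root_general
    (k : ℕ) (hk : 2 ≤ k) (c : ℕ)
    (hirr : Irreducible (Polynomial.X ^ (2 ^ k) - Polynomial.C (c : ℚ)))
    (a : ℝ) (ha : 0 < a) (hpow : a ^ (2 ^ k) = (c : ℝ)) :
    IsPrimitive ℚ ℂ ℚ⟮((a : ℂ))⟯ := by
  rintro ⟨L, F, ⟨hLa, hLdeg, -, -, hLF, hLFa⟩, hF⟩
  have hL : L ≠ ⊥ := by rintro rfl; simp at hLdeg
  have hpow' : a ^ (2 ^ k) = ((c : ℚ) : ℝ) := by exact_mod_cast hpow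
  have hsqrt {E : IntermediateField ℚ ℂ} (hEa : E ≤ ℚ⟮(a : ℂ)⟯) (hE : E ≠ ⊥) :
      (a : ℂ) ^ (2 ^ (k - 1)) ∈ E :=
    pow_prime_pow_pred_mem_of_le_adjoin Nat.prime_two hirr ha.le hpow' hEa hE
  have hmem : (a : ℂ) ^ (2 ^ (k - 1)) ∈ galClosure ℚ ℂ L ⊓ F :=
    ⟨le_galClosure L (hsqrt hLa hL), hsqrt (hLFa ▸ le_sup_right) hF⟩
  obtain ⟨q, hq⟩ := mem_bot.mp (hLF ▸ hmem)
  refine pow_ne_of_irreducible_X_pow_sub_C hirr (dvd_pow_self 2 (by omega)) (by norm_num) q ?_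
  have hq2 : ((q ^ 2 : ℚ) : ℂ) = ((c : ℚ) : ℂ) := by
    rw [Rat.cast_pow, ← eq_ratCast (algebraMap ℚ ℂ) q, hq, ← pow_mul, ← pow_succ,
      Nat.sub_add_cancel (by omega)]
    exact_mod_cast congrArg ((↑) : ℝ → ℂ) hpow
  exact_mod_cast hq2

/-- Let `n = 2 ^ k` with `k ≥ 2`, and let `c` be a positive odd integer such
that `x ^ n - c` is irreducible over `ℚ`. Let `a = c^{1/n}` be the positive real root of
`x ^ n - c` and `L = ℚ(a)`. Then `L/ℚ` is primitive. -/
theorem primitive_rational_two_power_root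
    (k : ℕ) (hk : 2 ≤ k) (c : ℕ) (hodd : Odd c) (hcpos : 0 < c)
    (hirr : Irreducible (Polynomial.X ^ (2 ^ k) - Polynomial.C (c : ℚ)))
    (a : ℝ) (ha : 0 < a) (hpow : a ^ (2 ^ k) = (c : ℝ)) :
    IsPrimitive ℚ ℂ ℚ⟮((a : ℂ))⟯ :=
  primitive_rational_two_power_root_general k hk c hirr a ha hpow
end
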